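/- (Theorem 5(ii).) If β·W < 1, then G(W, p; β) < 1 for every p ∈ [0,1); consequently the optimal threshold max{1, ⌈G(W, p; β)⌉} equals 1. The key inequality is R²/(1−R)² + (R + 2βW)/(1−R) + 1/4 < (1 + (1+R)/(2(1−R)))² whenever βW < 1 and 0 ≤ R < 1. -/

import Mathlib

/-
With `a = (1+R)/(2(1−R))`, the radicand of `G` falls short of `(1 + a)²` by exactly
`2(1 − βW)/(1 − R)`, so `βW < 1` gives `√radicand < 1 + a`, i.e. `G = −a + √radicand < 1`.
-/

/-- The optimal-threshold function `G(W, p; β)` of Corollary 1, with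
`R = 1 − (1−p)·W`. -/
noncomputable def G (W p β : ℝ) : ℝ :=
  let R := 1 - (1 - p) * W;
  -(1 + R) / (2 * (1 - R)) +
    Real.sqrt (R ^ 2 / (1 - R) ^ 2 + (R + 2 * β * W) / (1 - R) + 1 / 4)

lemma sq_one_add_sub_radicand {R : ℝ} (hR : R < 1) (β W : ℝ) :
    (1 + (1 + R) / (2 * (1 - R))) ^ 2 -
        (R ^ 2 / (1 - R) ^ 2 + (R + 2 * β * W) / (1 - R) + 1 / 4) =
      2 * (1 - β * W) / (1 - R) := by
  have : 1 - R ≠ 0 := by linarith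
  field_simp
  ring

lemma radicand_lt_sq {β W R : ℝ} (h : β * W < 1) (hR : R < 1) :
    R ^ 2 / (1 - R) ^ 2 + (R + 2 * β * W) / (1 - R) + 1 / 4 <
      (1 + (1 + R) / (2 * (1 - R))) ^ 2 := by
  have hgap : 0 < 2 * (1 - β * W) / (1 - R) :=
    div_pos (by linarith) (by linarith)
  linarith [sq_one_add_sub_radicand hR β W]

lemma one_add_div_pos {R : ℝ} (hR : R < 1) : 0 < 1 + (1 + R) / (2 * (1 - R)) := by
  have : 1 + (1 + R) / (2 * (1 - R)) = (3 - R) / (2 * (1 - R)) := by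
    field_simp [show 1 - R ≠ 0 by linarith]
    ring
  rw [this]
  exact div_pos (by linarith) (by linarith)

lemma G_lt_one {β W p : ℝ} (h : β * W < 1) (hW : 0 < W) (hp : p < 1) : G W p β < 1 := by
  set R := 1 - (1 - p) * W with hRdef
  have hR : R < 1 := by nlinarith
  have hsqrt := (Real.sqrt_lt' (one_add_div_pos hR)).2 (radicand_lt_sq h hR)
  change -(1 + R) / (2 * (1 - R)) + Real.sqrt _ < 1
  rw [neg_div]
  linarith

theorem threshold_is_one_general (β W : ℝ) (hW0 : 0 < W)
    (h : β * W < 1) :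
    (∀ p : ℝ, 0 ≤ p → p < 1 → G W p β < 1 ∧ max 1 ⌈G W p β⌉ = 1) ∧
    (∀ R : ℝ, 0 ≤ R → R < 1 →
      R ^ 2 / (1 - R) ^ 2 + (R + 2 * β * W) / (1 - R) + 1 / 4 <
        (1 + (1 + R) / (2 * (1 - R))) ^ 2) := by
  refine ⟨fun p _ hp => ?_, fun R _ hR => radicand_lt_sq h hR⟩
  have hG := G_lt_one h hW0 hp
  exact ⟨hG, max_eq_left (Int.ceil_le.2 (by exact_mod_cast hG.le))⟩

/-- Theorem 5(ii): if `β·W < 1` then `G(W, p; β) < 1`, hence the optimal threshold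
`max {1, ⌈G⌉}` equals `1`; the key inequality compares the radicand with the square of
`1 + (1+R)/(2(1−R))`. -/
theorem threshold_is_one (β W : ℝ) (hβ : 0 ≤ β) (hW0 : 0 < W) (hW1 : W ≤ 1)
    (h : β * W < 1) :
    (∀ p : ℝ, 0 ≤ p → p < 1 → G W p β < 1 ∧ max 1 ⌈G W p β⌉ = 1) ∧
    (∀ R : ℝ, 0 ≤ R → R < 1 →
      R ^ 2 / (1 - R) ^ 2 + (R + 2 * β * W) / (1 - R) + 1 / 4 <
        (1 + (1 + R) / (2 * (1 - R))) ^ 2) :=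
  threshold_is_one_general β W hW0 h
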